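/- Let ρ ∈ (0,1], let v be a unit vector in ℝ³, and let T = T(v, y₀, s₀, C₁ρ, L) be a tube of radius C₁ρ and length parameter L ≥ 1 with axis parallel to v. Let φ ∈ L²(ℝ³) satisfy |φ(x)| ≤ A ρ⁻¹ (1 + dist(x,T)/ρ)^{−N} for all x ∈ ℝ³, with A ≥ 1 and N > 2. Let μ be a positive Borel measure on ℝ³ supported in a set of diameter at most D, and suppose there exist β ∈ (0,2] and C_proj > 0 such that (π_v)_#μ(B_{v^⊥}(z,r)) ≤ C_proj r^β for every z ∈ v^⊥ and every 0 < r ≤ 1. Then ∫_{ℝ³} |φ(x)|² dμ(x) ≤ C A² C_proj ρ^{β−2}, where C ≥ 1 depends only on N, β, C₁, L, and D. -/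

import Mathlib

noncomputable section
open MeasureTheory Metric Set Function
open scoped ENNReal RealInnerProductSpace

abbrev E3 : Type := EuclideanSpace ℝ (Fin 3)

/-- The tube `T(v, y₀, s₀, r, L) = {y + s v : y ∈ v^⊥, |y − y₀| ≤ r, |s − s₀| ≤ L}`. -/
def tube (v y₀ : E3) (s₀ r L : ℝ) : Set E3 :=
  {x | ‖x - ⟪x, v⟫ • v - y₀‖ ≤ r ∧ |⟪x, v⟫ - s₀| ≤ L}

/-- Orthogonal projection onto the plane `v^⊥`. -/
def projPerp (v x : E3) : E3 := x - ⟪x, v⟫ • v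

/-!
Split ℝ³ into the shells on which `dist(x, T) / ρ` has integer part `k`. There
`|φ|² ≤ A²ρ⁻²(k+1)^(-2N)`, and the shell lies over the disc of radius `2C₁(k+1)ρ` about `y₀`
in `v^⊥`. The projective hypothesis bounds the `(π_v)_#μ`-measure of that disc by
`343·Cproj·(2C₁(k+1))³ρ^β`: directly when the radius is at most `1`, and after covering the disc
by `O(radius³)` unit balls otherwise. The resulting series in `k` converges because `2N - 3 > 1`.
-/

lemma projPerp_eq_starProjection {v : E3} (hv : ‖v‖ = 1) :
    projPerp v = (ℝ ∙ v)ᗮ.starProjection := by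
  ext1 x
  simp [projPerp, Submodule.starProjection_unit_singleton ℝ hv, real_inner_comm]

lemma tube_subset_preimage_projPerp (v y₀ : E3) (s₀ r L : ℝ) :
    tube v y₀ s₀ r L ⊆ projPerp v ⁻¹' closedBall y₀ r := fun x hx => by
  simpa [projPerp, dist_eq_norm] using hx.1

lemma tube_nonempty {v y₀ : E3} (hv : ‖v‖ = 1) (hy₀ : ⟪y₀, v⟫ = 0) (s₀ : ℝ) {r L : ℝ}
    (hr : 0 ≤ r) (hL : 0 ≤ L) : (tube v y₀ s₀ r L).Nonempty := by
  have hs : ⟪y₀ + s₀ • v, v⟫ = s₀ := by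
    simp [inner_add_left, real_inner_smul_left, hy₀, hv]
  exact ⟨y₀ + s₀ • v, by simp [tube, hs, hr, hL]⟩

lemma setOf_infDist_lt_subset_preimage_closedBall {X Y : Type*} [PseudoMetricSpace X]
    [PseudoMetricSpace Y] {f : X → Y} (hf : LipschitzWith 1 f) {s : Set X} (hs : s.Nonempty)
    {c : Y} {r : ℝ} (hsub : s ⊆ f ⁻¹' closedBall c r) (δ : ℝ) :
    {x | infDist x s < δ} ⊆ f ⁻¹' closedBall c (r + δ) := by
  intro x hx
  obtain ⟨y, hys, hxy⟩ := (infDist_lt_iff hs).mp hx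
  calc dist (f x) c ≤ dist (f x) (f y) + dist (f y) c := dist_triangle _ _ _
    _ ≤ dist x y + r := add_le_add (by simpa using hf.dist_le_mul x y) (hsub hys)
    _ ≤ r + δ := by linarith

lemma preimage_closedBall_subset_preimage_closedBall_apply {X : Type*} [PseudoMetricSpace X]
    {P : X → X} (hP : LipschitzWith 1 P) (hPP : ∀ x, P (P x) = P x) (p : X) (r : ℝ) :
    P ⁻¹' closedBall p r ⊆ P ⁻¹' closedBall (P p) r := fun x hx =>
  calc dist (P x) (P p) = dist (P (P x)) (P p) := by rw [hPP]
    _ ≤ dist (P x) p := hP.dist_le_mul_of_le le_rfl |>.trans (by simp)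
    _ ≤ r := hx

lemma map_closedBall_le_card_mul_of_cover {X : Type*} [PseudoMetricSpace X] [MeasurableSpace X]
    [BorelSpace X] {P : X → X} (hP : LipschitzWith 1 P) (hPP : ∀ x, P (P x) = P x)
    (μ : Measure X) {c : X} {m : ℝ} {t : Finset X} (ht : closedBall c m ⊆ ⋃ p ∈ t, closedBall p 1)
    {M : ℝ≥0∞} (hM : ∀ p, μ.map P (closedBall (P p) 1) ≤ M) :
    μ.map P (closedBall c m) ≤ t.card * M := by
  have hmap : ∀ q r, μ.map P (closedBall q r) = μ (P ⁻¹' closedBall q r) := fun q r =>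
    Measure.map_apply hP.continuous.measurable measurableSet_closedBall
  calc μ.map P (closedBall c m) ≤ μ.map P (⋃ p ∈ t, closedBall p 1) := measure_mono ht
    _ ≤ ∑ p ∈ t, μ.map P (closedBall p 1) := measure_biUnion_finset_le t _
    _ ≤ ∑ p ∈ t, μ.map P (closedBall (P p) 1) := by
        refine Finset.sum_le_sum fun p _ => ?_
        rw [hmap, hmap]
        exact measure_mono (preimage_closedBall_subset_preimage_closedBall_apply hP hPP p 1)
    _ ≤ ∑ _p ∈ t, M := Finset.sum_le_sum fun p _ => hM p
    _ = t.card * M := by rw [Finset.sum_const, nsmul_eq_mul]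

lemma floor_two_mul_mem_Icc {a m : ℝ} (ha : |a| ≤ m) :
    ⌊2 * a⌋ ∈ Finset.Icc (-(⌈2 * m⌉₊ : ℤ)) ⌈2 * m⌉₊ := by
  obtain ⟨hlo, hhi⟩ := abs_le.mp ha
  rw [Finset.mem_Icc, Int.le_floor, Int.floor_le_iff]
  push_cast
  constructor <;> linarith [Nat.le_ceil (2 * m)]

lemma norm_sub_toLp_floor_two_mul_div_two_le_one (w : E3) :
    ‖w - WithLp.toLp 2 fun i => (⌊2 * w i⌋ : ℝ) / 2‖ ≤ 1 := by
  have hcoord : ∀ i, ‖(w - WithLp.toLp 2 fun i => (⌊2 * w i⌋ : ℝ) / 2) i‖ ^ 2 ≤ 1 / 4 := by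
    intro i
    have h₁ : (⌊2 * w i⌋ : ℝ) ≤ 2 * w i := Int.floor_le _
    have h₂ : 2 * w i < ⌊2 * w i⌋ + 1 := Int.lt_floor_add_one _
    simp only [PiLp.sub_apply, Real.norm_eq_abs, sq_abs]
    nlinarith
  refine (sq_le_one_iff₀ (norm_nonneg _)).mp ?_
  rw [EuclideanSpace.norm_sq_eq, Fin.sum_univ_three]
  linarith [hcoord 0, hcoord 1, hcoord 2]

lemma exists_finset_closedBall_cover (c : E3) {m : ℝ} (hm : 1 ≤ m) :
    ∃ t : Finset E3, (t.card : ℝ) ≤ 343 * m ^ 3 ∧ closedBall c m ⊆ ⋃ p ∈ t, closedBall p 1 := by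
  set n : ℕ := ⌈2 * m⌉₊
  have hn : (n : ℝ) < 2 * m + 1 := Nat.ceil_lt_add_one (by linarith)
  let J : Finset (Fin 3 → ℤ) := Fintype.piFinset fun _ => Finset.Icc (-(n : ℤ)) n
  let center : (Fin 3 → ℤ) → E3 := fun j => c + WithLp.toLp 2 fun i => (j i : ℝ) / 2
  refine ⟨J.image center, ?_, fun x hx => ?_⟩
  · have hJ : J.card = (2 * n + 1) ^ 3 := by
      simp only [J, Fintype.card_piFinset, Int.card_Icc, Finset.prod_const, Finset.card_univ,
        Fintype.card_fin]
      congr 1; omega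
    calc ((J.image center).card : ℝ) ≤ J.card := by exact_mod_cast Finset.card_image_le
      _ = (2 * n + 1) ^ 3 := by rw [hJ]; push_cast; ring
      _ ≤ (7 * m) ^ 3 := by gcongr; linarith
      _ = 343 * m ^ 3 := by ring
  · set w := x - c
    have hw : ‖w‖ ≤ m := by rwa [mem_closedBall, dist_eq_norm] at hx
    have hj : (fun i => ⌊2 * w i⌋) ∈ J := Fintype.mem_piFinset.mpr fun i =>
      floor_two_mul_mem_Icc ((PiLp.norm_apply_le w i).trans hw)
    refine mem_biUnion (Finset.mem_image_of_mem center hj) ?_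
    have hxw : x - center (fun i => ⌊2 * w i⌋) =
        w - WithLp.toLp 2 fun i => (⌊2 * w i⌋ : ℝ) / 2 := by
      simp only [center, w]; abel
    rw [mem_closedBall, dist_eq_norm, hxw]
    exact norm_sub_toLp_floor_two_mul_div_two_le_one w

lemma map_starProjection_closedBall_le (K : Submodule ℝ E3) [K.HasOrthogonalProjection]
    (μ : Measure E3) {β Cproj : ℝ} (hβ : β ≤ 3) (hCproj : 0 ≤ Cproj)
    (hproj : ∀ z ∈ K, ∀ r ∈ Ioc (0 : ℝ) 1,
      μ.map K.starProjection (closedBall z r) ≤ ENNReal.ofReal (Cproj * r ^ β))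
    {ρ R : ℝ} (hρ : ρ ∈ Ioc (0 : ℝ) 1) (hR : 1 ≤ R) {z : E3} (hz : z ∈ K) :
    μ.map K.starProjection (closedBall z (R * ρ)) ≤
      ENNReal.ofReal (343 * Cproj * R ^ 3 * ρ ^ β) := by
  obtain ⟨hρ₀, hρ₁⟩ := hρ
  have hρβ : 0 ≤ ρ ^ β := Real.rpow_nonneg hρ₀.le β
  rcases le_or_gt (R * ρ) 1 with hsmall | hlarge
  · refine (hproj z hz _ ⟨by positivity, hsmall⟩).trans (ENNReal.ofReal_le_ofReal ?_)
    have hRβ : R ^ β ≤ R ^ 3 := by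
      simpa using Real.rpow_le_rpow_of_exponent_le hR hβ
    calc Cproj * (R * ρ) ^ β = Cproj * (R ^ β * ρ ^ β) := by
          rw [Real.mul_rpow (by positivity) hρ₀.le]
      _ ≤ Cproj * (R ^ 3 * ρ ^ β) := by gcongr
      _ ≤ 343 * Cproj * R ^ 3 * ρ ^ β := by
          nlinarith [mul_nonneg (mul_nonneg hCproj (by positivity : (0 : ℝ) ≤ R ^ 3)) hρβ]
  · obtain ⟨t, ht_card, ht⟩ := exists_finset_closedBall_cover z hlarge.le
    have hunit : ∀ p, μ.map K.starProjection (closedBall (K.starProjection p) 1) ≤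
        ENNReal.ofReal Cproj := fun p => by
      simpa using hproj _ (K.starProjection_apply_mem p) 1 ⟨one_pos, le_rfl⟩
    have hidem : ∀ x, K.starProjection (K.starProjection x) = K.starProjection x := fun x =>
      K.starProjection_eq_self_iff.mpr (K.starProjection_apply_mem x)
    have hρ3 : ρ ^ 3 ≤ ρ ^ β := by
      simpa using Real.rpow_le_rpow_of_exponent_ge hρ₀ hρ₁ hβ
    calc μ.map K.starProjection (closedBall z (R * ρ)) ≤ t.card * ENNReal.ofReal Cproj :=
          map_closedBall_le_card_mul_of_cover K.lipschitzWith_starProjection hidem μ ht hunit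
      _ ≤ ENNReal.ofReal (343 * (R * ρ) ^ 3) * ENNReal.ofReal Cproj := by
          gcongr
          rw [← ENNReal.ofReal_natCast]
          exact ENNReal.ofReal_le_ofReal ht_card
      _ = ENNReal.ofReal (343 * Cproj * R ^ 3 * ρ ^ 3) := by
          rw [← ENNReal.ofReal_mul (by positivity)]; ring_nf
      _ ≤ ENNReal.ofReal (343 * Cproj * R ^ 3 * ρ ^ β) := by gcongr

lemma measure_infDist_tube_lt_le {v y₀ : E3} (hv : ‖v‖ = 1) (hy₀ : ⟪y₀, v⟫ = 0) (s₀ : ℝ)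
    {C₁ L β Cproj ρ : ℝ} (hC₁ : 1 ≤ C₁) (hL : 0 ≤ L) (hβ : β ≤ 3) (hCproj : 0 ≤ Cproj)
    (hρ : ρ ∈ Ioc (0 : ℝ) 1) (μ : Measure E3)
    (hproj : ∀ z : E3, ⟪z, v⟫ = 0 → ∀ r ∈ Ioc (0 : ℝ) 1,
      μ.map (projPerp v) (closedBall z r) ≤ ENNReal.ofReal (Cproj * r ^ β)) (k : ℕ) :
    μ {x | infDist x (tube v y₀ s₀ (C₁ * ρ) L) < (k + 1) * ρ} ≤
      ENNReal.ofReal (2744 * C₁ ^ 3 * Cproj * ρ ^ β * (k + 1) ^ (3 : ℝ)) := by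
  set K := (ℝ ∙ v)ᗮ
  have hK : ∀ z, z ∈ K ↔ ⟪z, v⟫ = 0 := fun z => Submodule.mem_orthogonal_singleton_iff_inner_left
  rw [projPerp_eq_starProjection hv] at hproj
  have hT := setOf_infDist_lt_subset_preimage_closedBall K.lipschitzWith_starProjection
    (tube_nonempty hv hy₀ s₀ (by nlinarith [hρ.1]) hL)
    (projPerp_eq_starProjection hv ▸ tube_subset_preimage_projPerp v y₀ s₀ (C₁ * ρ) L)
    ((k + 1) * ρ)
  have hradius : C₁ * ρ + (k + 1) * ρ ≤ (2 * C₁ * (k + 1)) * ρ := by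
    have : C₁ + (k + 1) ≤ 2 * C₁ * (k + 1) := by nlinarith [k.cast_nonneg (α := ℝ)]
    nlinarith [mul_le_mul_of_nonneg_right this hρ.1.le]
  have hball := map_starProjection_closedBall_le K μ hβ hCproj
    (fun z hz => hproj z ((hK z).mp hz)) hρ (R := 2 * C₁ * (k + 1)) (by nlinarith)
    ((hK y₀).mpr hy₀)
  rw [Measure.map_apply K.lipschitzWith_starProjection.continuous.measurable
    measurableSet_closedBall] at hball
  calc μ {x | infDist x (tube v y₀ s₀ (C₁ * ρ) L) < (k + 1) * ρ}
      ≤ μ (K.starProjection ⁻¹' closedBall y₀ ((2 * C₁ * (k + 1)) * ρ)) :=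
        measure_mono (hT.trans (preimage_mono (closedBall_subset_closedBall hradius)))
    _ ≤ _ := hball.trans (le_of_eq (by rw [Real.rpow_ofNat]; ring_nf))

lemma summable_nat_add_one_rpow {q : ℝ} (hq : q < -1) :
    Summable fun k : ℕ => ((k : ℝ) + 1) ^ q := by
  simpa using (summable_nat_add_iff 1).mpr (Real.summable_nat_rpow.mpr hq)

lemma lintegral_le_tsum_mul_measure_preimage {X : Type*} [MeasurableSpace X] (μ : Measure X)
    {f : X → ℝ≥0∞} {n : X → ℕ} (hn : Measurable n) {g : ℕ → ℝ≥0∞}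
    (hfg : ∀ x, f x ≤ g (n x)) :
    ∫⁻ x, f x ∂μ ≤ ∑' k, g k * μ (n ⁻¹' {k}) :=
  calc ∫⁻ x, f x ∂μ ≤ ∫⁻ x, g (n x) ∂μ := lintegral_mono hfg
    _ = ∫⁻ k, g k ∂μ.map n := (lintegral_map measurable_from_nat hn).symm
    _ = ∑' k, g k * μ (n ⁻¹' {k}) := by
        simp only [lintegral_countable', Measure.map_apply hn (measurableSet_singleton _)]

lemma lintegral_nnnorm_sq_le_of_decay {X F : Type*} [MeasurableSpace X]
    [SeminormedAddCommGroup F] (μ : Measure X) {φ : X → F} {d : X → ℝ} (hd : Measurable d)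
    (hd₀ : ∀ x, 0 ≤ d x) {ρ a b p N : ℝ} (hρ : 0 < ρ) (hb : 0 ≤ b) (hN : 0 ≤ N)
    (hpN : p - 2 * N < -1) (hφ : ∀ x, ‖φ x‖ ≤ a * (1 + d x / ρ) ^ (-N))
    (hμ : ∀ k : ℕ, μ {x | d x < (k + 1) * ρ} ≤ ENNReal.ofReal (b * (k + 1) ^ p)) :
    ∫⁻ x, (‖φ x‖₊ : ℝ≥0∞) ^ 2 ∂μ ≤
      ENNReal.ofReal (a ^ 2 * b * ∑' k : ℕ, ((k : ℝ) + 1) ^ (p - 2 * N)) := by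
  set n : X → ℕ := fun x => ⌊d x / ρ⌋₊
  have hφn : ∀ x, (‖φ x‖₊ : ℝ≥0∞) ^ 2 ≤ ENNReal.ofReal ((a * (n x + 1) ^ (-N)) ^ 2) := by
    intro x
    have hdρ : 0 ≤ d x / ρ := div_nonneg (hd₀ x) hρ.le
    have hdecay : (1 + d x / ρ) ^ (-N) ≤ ((n x : ℝ) + 1) ^ (-N) :=
      Real.rpow_le_rpow_of_nonpos (by positivity) (by linarith [Nat.floor_le hdρ]) (by linarith)
    have ha : 0 ≤ a * (1 + d x / ρ) ^ (-N) := (norm_nonneg _).trans (hφ x)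
    have ha' : 0 ≤ a := nonneg_of_mul_nonneg_left ha (by positivity)
    rw [ENNReal.ofReal_pow (by positivity), ← enorm_eq_nnnorm, ← ofReal_norm]
    gcongr
    exact (hφ x).trans (mul_le_mul_of_nonneg_left hdecay ha')
  have hfibre : ∀ k, n ⁻¹' {k} ⊆ {x | d x < (k + 1) * ρ} := by
    rintro k x rfl
    exact (div_lt_iff₀ hρ).mp (Nat.lt_floor_add_one _)
  have hterm : ∀ k : ℕ, ENNReal.ofReal ((a * (k + 1) ^ (-N)) ^ 2) * μ (n ⁻¹' {k}) ≤
      ENNReal.ofReal (a ^ 2 * b * ((k : ℝ) + 1) ^ (p - 2 * N)) := by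
    intro k
    have hk : (0 : ℝ) < k + 1 := by positivity
    have hpow : (((k : ℝ) + 1) ^ (-N)) ^ 2 * ((k : ℝ) + 1) ^ p = ((k : ℝ) + 1) ^ (p - 2 * N) := by
      rw [← Real.rpow_mul_natCast hk.le, ← Real.rpow_add hk]; congr 1; push_cast; ring
    calc ENNReal.ofReal ((a * (k + 1) ^ (-N)) ^ 2) * μ (n ⁻¹' {k})
        ≤ ENNReal.ofReal ((a * (k + 1) ^ (-N)) ^ 2) * ENNReal.ofReal (b * (k + 1) ^ p) := by
          gcongr; exact (measure_mono (hfibre k)).trans (hμ k)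
      _ = ENNReal.ofReal (a ^ 2 * b * ((k : ℝ) + 1) ^ (p - 2 * N)) := by
          rw [← ENNReal.ofReal_mul (by positivity), ← hpow]; ring_nf
  have hsum := (summable_nat_add_one_rpow hpN).mul_left (a ^ 2 * b)
  calc ∫⁻ x, (‖φ x‖₊ : ℝ≥0∞) ^ 2 ∂μ
      ≤ ∑' k : ℕ, ENNReal.ofReal ((a * ((k : ℝ) + 1) ^ (-N)) ^ 2) * μ (n ⁻¹' {k}) :=
        lintegral_le_tsum_mul_measure_preimage μ (hd.div_const ρ).nat_floor hφn
    _ ≤ ∑' k : ℕ, ENNReal.ofReal (a ^ 2 * b * ((k : ℝ) + 1) ^ (p - 2 * N)) :=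
        ENNReal.tsum_le_tsum hterm
    _ = ENNReal.ofReal (a ^ 2 * b * ∑' k : ℕ, ((k : ℝ) + 1) ^ (p - 2 * N)) := by
        rw [← tsum_mul_left, ENNReal.ofReal_tsum_of_nonneg (fun k => by positivity) hsum]

theorem wave_packet_projective_bound_general (N β C₁ L D : ℝ) (hN : 2 < N)
    (hβ : β ∈ Set.Ioc (0 : ℝ) 2) (hC₁ : 1 ≤ C₁) (hL : 1 ≤ L) :
    ∃ C : ℝ, 1 ≤ C ∧
      ∀ ρ : ℝ, ρ ∈ Set.Ioc (0 : ℝ) 1 →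
      ∀ v y₀ : E3, ‖v‖ = 1 → ⟪y₀, v⟫ = 0 → ∀ s₀ : ℝ,
      ∀ A : ℝ, 1 ≤ A → ∀ φ : E3 → ℂ, MemLp φ 2 volume →
        (∀ x : E3,
          ‖φ x‖ ≤ A * ρ⁻¹ * (1 + infDist x (tube v y₀ s₀ (C₁ * ρ) L) / ρ) ^ (-N)) →
        ∀ μ : Measure E3,
          -- μ is supported in a set of diameter at most D
          (∃ s : Set E3, Metric.diam s ≤ D ∧ μ sᶜ = 0) →
          ∀ Cproj : ℝ, 0 < Cproj →
            -- projective hypothesis with exponent β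
            (∀ z : E3, ⟪z, v⟫ = 0 → ∀ r : ℝ, r ∈ Set.Ioc (0 : ℝ) 1 →
              Measure.map (projPerp v) μ (Metric.closedBall z r) ≤
                ENNReal.ofReal (Cproj * r ^ β)) →
            (∫⁻ x, ((‖φ x‖₊ : ℝ≥0∞)) ^ 2 ∂μ) ≤
              ENNReal.ofReal (C * A ^ 2 * Cproj * ρ ^ (β - 2)) := by
  set S := ∑' k : ℕ, ((k : ℝ) + 1) ^ (3 - 2 * N)
  refine ⟨max 1 (2744 * C₁ ^ 3 * S), le_max_left _ _, ?_⟩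
  intro ρ hρ v y₀ hv hy₀ s₀ A _ φ _ hφ μ _ Cproj hCproj hproj
  have hS : 0 ≤ S := tsum_nonneg fun k => by positivity
  have hC₁₀ : 0 ≤ C₁ := by linarith
  have hρ₀ : 0 < ρ := hρ.1
  have hbound := lintegral_nnnorm_sq_le_of_decay μ (continuous_infDist_pt _).measurable
    (fun _ => infDist_nonneg) hρ₀ (by positivity) (by linarith) (by linarith) hφ
    (measure_infDist_tube_lt_le hv hy₀ s₀ hC₁ (by linarith) (by linarith [hβ.2]) hCproj.le hρ μ
      hproj)
  refine hbound.trans (ENNReal.ofReal_le_ofReal ?_)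
  have hρβ : ρ ^ (β - 2) = ρ⁻¹ ^ 2 * ρ ^ β := by
    rw [Real.rpow_sub hρ₀, Real.rpow_two, div_eq_mul_inv, inv_pow, mul_comm]
  calc (A * ρ⁻¹) ^ 2 * (2744 * C₁ ^ 3 * Cproj * ρ ^ β) * S
      = 2744 * C₁ ^ 3 * S * (A ^ 2 * Cproj * ρ ^ (β - 2)) := by rw [hρβ]; ring
    _ ≤ max 1 (2744 * C₁ ^ 3 * S) * A ^ 2 * Cproj * ρ ^ (β - 2) := by
        rw [mul_assoc _ (A ^ 2), mul_assoc _ (A ^ 2 * Cproj)]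
        exact mul_le_mul_of_nonneg_right (le_max_right _ _) (by positivity)

/-- projective bound for the energy of one wave packet. -/
theorem wave_packet_projective_bound (N β C₁ L D : ℝ) (hN : 2 < N)
    (hβ : β ∈ Set.Ioc (0 : ℝ) 2) (hC₁ : 1 ≤ C₁) (hL : 1 ≤ L) (hD : 0 < D) :
    ∃ C : ℝ, 1 ≤ C ∧
      ∀ ρ : ℝ, ρ ∈ Set.Ioc (0 : ℝ) 1 →
      ∀ v y₀ : E3, ‖v‖ = 1 → ⟪y₀, v⟫ = 0 → ∀ s₀ : ℝ,
      ∀ A : ℝ, 1 ≤ A → ∀ φ : E3 → ℂ, MemLp φ 2 volume →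
        (∀ x : E3,
          ‖φ x‖ ≤ A * ρ⁻¹ * (1 + infDist x (tube v y₀ s₀ (C₁ * ρ) L) / ρ) ^ (-N)) →
        ∀ μ : Measure E3,
          -- μ is supported in a set of diameter at most D
          (∃ s : Set E3, Metric.diam s ≤ D ∧ μ sᶜ = 0) →
          ∀ Cproj : ℝ, 0 < Cproj →
            -- projective hypothesis with exponent β
            (∀ z : E3, ⟪z, v⟫ = 0 → ∀ r : ℝ, r ∈ Set.Ioc (0 : ℝ) 1 →
              Measure.map (projPerp v) μ (Metric.closedBall z r) ≤
                ENNReal.ofReal (Cproj * r ^ β)) →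
            (∫⁻ x, ((‖φ x‖₊ : ℝ≥0∞)) ^ 2 ∂μ) ≤
              ENNReal.ofReal (C * A ^ 2 * Cproj * ρ ^ (β - 2)) :=
  wave_packet_projective_bound_general N β C₁ L D hN hβ hC₁ hL
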